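/- arXiv:2604.22373 — 3 statements merged into one kernel-verified Lean document; each statement's English description precedes it below -/
import Mathlib

section
/- Let (G,·,∘) be a skew brace and define the star product x*y := λ_x(y)·y⁻¹. Let I be a subgroup of (G,·) that is stable under every automorphism of (G,·) (i.e. characteristic). If x*y ∈ I for all x ∈ I and y ∈ G, then I is an ideal of the skew brace, i.e. I is normal in (G,·), normal in (G,∘), and λ_a(I) = I for all a ∈ G. -/
/-- Let `(G, ·, ∘)` be a skew brace, `x * y := λ_x(y) · y⁻¹` the star product,
and `I` a characteristic subgroup of `(G, ·)`.  If `x * y ∈ I` for all `x ∈ I`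
and `y ∈ G`, then `I` is an ideal: normal in `(G, ·)`, a normal subgroup of
`(G, ∘)`, and `λ_a(I) = I` for every `a`. -/
theorem skewBrace_characteristic_star_ideal {G : Type*} [Group G]
    (circ : G → G → G) (cinv : G → G) (ce : G)
    (hassoc : ∀ a b c : G, circ (circ a b) c = circ a (circ b c))
    (hIdL : ∀ a : G, circ ce a = a)
    (hIdR : ∀ a : G, circ a ce = a)
    (hInvL : ∀ a : G, circ (cinv a) a = ce)
    (hInvR : ∀ a : G, circ a (cinv a) = ce)
    (hbrace : ∀ a b c : G, circ a (b * c) = circ a b * a⁻¹ * circ a c)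
    (lam : G → G → G) (hlam : ∀ a b : G, lam a b = a⁻¹ * circ a b)
    (I : Subgroup G)
    (hchar : ∀ φ : G ≃* G, ∀ x ∈ I, φ x ∈ I)
    (hstar : ∀ x ∈ I, ∀ y : G, lam x y * y⁻¹ ∈ I) :
    I.Normal ∧
    (∀ x ∈ I, ∀ y ∈ I, circ x y ∈ I) ∧
    (∀ x ∈ I, cinv x ∈ I) ∧
    (∀ g : G, ∀ x ∈ I, circ (circ g x) (cinv g) ∈ I) ∧
    (∀ a : G, lam a '' (I : Set G) = (I : Set G)) := by
  -- circ a 1 = a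
  have hone : ∀ a : G, circ a 1 = a := by
    intro a
    have h := hbrace a 1 1
    rw [one_mul] at h
    have : circ a 1 * 1 = circ a 1 * (a⁻¹ * circ a 1) := by
      rw [mul_one]; rw [← mul_assoc]; exact h
    have h2 : (1 : G) = a⁻¹ * circ a 1 := mul_left_cancel this
    have := congrArg (a * ·) h2
    simpa [mul_assoc] using this.symm
  -- ce = 1
  have hce : ce = 1 := by
    have h1 := hone ce
    have h2 := hIdL (1 : G)
    rw [h2] at h1; exact h1.symm
  -- λ is multiplicative
  have hmul : ∀ a b c : G, lam a (b * c) = lam a b * lam a c := by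
    intro a b c
    rw [hlam, hlam, hlam, hbrace]
    group
  -- circ a b = a * lam a b
  have hcirc : ∀ a b : G, circ a b = a * lam a b := by
    intro a b; rw [hlam]; group
  -- circ a b⁻¹ = a * (circ a b)⁻¹ * a
  have hinv' : ∀ a b : G, circ a b⁻¹ = a * (circ a b)⁻¹ * a := by
    intro a b
    have h := hbrace a b b⁻¹
    rw [mul_inv_cancel, hone a] at h
    have : a = circ a b * a⁻¹ * circ a b⁻¹ := h
    calc circ a b⁻¹ = a * (circ a b)⁻¹ * (circ a b * a⁻¹ * circ a b⁻¹) := by group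
      _ = a * (circ a b)⁻¹ * a := by rw [← this]
  -- λ_{a∘b} = λ_a ∘ λ_b
  have hcomp : ∀ a b c : G, lam (circ a b) c = lam a (lam b c) := by
    intro a b c
    rw [hlam, hlam, hlam, hassoc, hbrace, hinv']
    group
  -- λ_{a⁻} λ_a = id and λ_a λ_{a⁻} = id
  have hlam_ce : ∀ b : G, lam ce b = b := by
    intro b; rw [hlam, hIdL, hce]; group
  have hli : ∀ a b : G, lam (cinv a) (lam a b) = b := by
    intro a b; rw [← hcomp, hInvL, hlam_ce]
  have hri : ∀ a b : G, lam a (lam (cinv a) b) = b := by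
    intro a b; rw [← hcomp, hInvR, hlam_ce]
  -- λ_a as a MulEquiv
  let φ : G → G ≃* G := fun a =>
    { toFun := lam a
      invFun := lam (cinv a)
      left_inv := hli a
      right_inv := hri a
      map_mul' := hmul a }
  have hlamI : ∀ a : G, ∀ x ∈ I, lam a x ∈ I := fun a x hx => hchar (φ a) x hx
  -- normality in (G, ·)
  have hNormal : I.Normal := by
    constructor
    intro n hn g
    have := hchar (MulAut.conj g) n hn
    simpa using this
  refine ⟨hNormal, ?_, ?_, ?_, ?_⟩
  · intro x hx y hy
    rw [hcirc]
    exact mul_mem hx (hlamI x y hy)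
  · intro x hx
    have h1 : lam x (cinv x) = x⁻¹ := by
      have := hcirc x (cinv x)
      rw [hInvR, hce] at this
      calc lam x (cinv x) = x⁻¹ * (x * lam x (cinv x)) := by group
        _ = x⁻¹ * 1 := by rw [← this]
        _ = x⁻¹ := mul_one _
    have : cinv x = lam (cinv x) x⁻¹ := by
      conv_rhs => rw [← h1, hli]
    rw [this]
    exact hlamI _ _ (inv_mem hx)
  · intro g x hx
    have hgc : lam g (cinv g) = g⁻¹ := by
      have := hcirc g (cinv g)
      rw [hInvR, hce] at this
      calc lam g (cinv g) = g⁻¹ * (g * lam g (cinv g)) := by group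
        _ = g⁻¹ * 1 := by rw [← this]
        _ = g⁻¹ := mul_one _
    set s := lam x (cinv g) * (cinv g)⁻¹ with hs
    have hsI : s ∈ I := hstar x hx (cinv g)
    have hsx : lam x (cinv g) = s * cinv g := by rw [hs]; group
    have key : circ (circ g x) (cinv g) = g * (lam g x * lam g s) * g⁻¹ := by
      rw [hcirc (circ g x), hcomp, hsx, hmul, hgc, hcirc g x]
      group
    rw [key]
    exact hNormal.conj_mem _ (mul_mem (hlamI g x hx) (hlamI g s hsI)) g
  · intro a
    ext y
    constructor
    · rintro ⟨x, hx, rfl⟩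
      exact hlamI a x hx
    · intro hy
      exact ⟨lam (cinv a) y, hlamI _ _ hy, hri a y⟩
end

section
/- Let G = ℝ³ with additive law (X,Y,Z)·(U,V,W) = (X+U, Y+V, Z+W), let s = s(X,Y,Z) := X - YZ, and define (X,Y,Z)∘(U,V,W) := (X+U+Z eˢ V + Y e^{-s} W, Y + eˢ V, Z + e^{-s} W). Then (G,·,∘) is a skew brace: ∘ is a group law and the compatibility a∘(b·c) = (a∘b)·a⁻¹·(a∘c) holds for all a,b,c ∈ ℝ³. -/
private lemma comb (X Y Z U V W : ℝ) :
    X + U + Z * Real.exp (X - Y*Z) * V + Y * Real.exp (-(X-Y*Z)) * W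
      - (Y + Real.exp (X-Y*Z)*V) * (Z + Real.exp (-(X-Y*Z))*W)
      = (X - Y*Z) + (U - V*W) := by
  have h : Real.exp (X-Y*Z) * Real.exp (-(X-Y*Z)) = 1 := by
    rw [← Real.exp_add]; simp
  linear_combination (-(V*W)) * h

/-- On `G = ℝ³` with the additive law and, setting `s := X - YZ`,
`(X,Y,Z)∘(U,V,W) := (X+U+Z eˢ V + Y e⁻ˢ W, Y + eˢ V, Z + e⁻ˢ W)`, the triple
`(G, +, ∘)` is a skew brace: `∘` is a group law and the skew brace
compatibility holds. -/
theorem real3_simple_skewBrace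
    (circ : (ℝ × ℝ × ℝ) → (ℝ × ℝ × ℝ) → (ℝ × ℝ × ℝ))
    (hcirc : ∀ X Y Z U V W : ℝ,
      circ (X, Y, Z) (U, V, W)
        = (X + U + Z * Real.exp (X - Y * Z) * V
              + Y * Real.exp (-(X - Y * Z)) * W,
           Y + Real.exp (X - Y * Z) * V,
           Z + Real.exp (-(X - Y * Z)) * W)) :
    (∀ a b c : ℝ × ℝ × ℝ, circ (circ a b) c = circ a (circ b c)) ∧
    (∀ a : ℝ × ℝ × ℝ, circ (0, 0, 0) a = a) ∧
    (∀ a : ℝ × ℝ × ℝ, circ a (0, 0, 0) = a) ∧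
    (∀ a : ℝ × ℝ × ℝ, ∃ b : ℝ × ℝ × ℝ,
      circ a b = (0, 0, 0) ∧ circ b a = (0, 0, 0)) ∧
    (∀ a b c : ℝ × ℝ × ℝ, circ a (b + c) = circ a b + (-a) + circ a c) := by
  refine ⟨?_, ?_, ?_, ?_, ?_⟩
  · rintro ⟨X, Y, Z⟩ ⟨U, V, W⟩ ⟨P, Q, R⟩
    simp only [hcirc, comb, Prod.mk.injEq]
    refine ⟨?_, ?_, ?_⟩
    · simp only [Real.exp_add, Real.exp_neg, neg_add, mul_inv]
      field_simp [Real.exp_ne_zero]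
      ring
    · rw [Real.exp_add]; ring
    · rw [neg_add, Real.exp_add]; ring
  · rintro ⟨X, Y, Z⟩
    simp [hcirc]
  · rintro ⟨X, Y, Z⟩
    simp [hcirc]
  · rintro ⟨X, Y, Z⟩
    have h : Real.exp (X - Y*Z) * Real.exp (-(X - Y*Z)) = 1 := by
      rw [← Real.exp_add]; simp
    refine ⟨(2*Y*Z - X, -Y * Real.exp (-(X - Y*Z)), -Z * Real.exp (X - Y*Z)), ?_, ?_⟩
    · simp only [hcirc, Prod.mk.injEq]
      refine ⟨by linear_combination (-(2*Y*Z)) * h,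
              by linear_combination (-Y) * h,
              by linear_combination (-Z) * h⟩
    · have h2 : 2*Y*Z - X - -Y * Real.exp (-(X - Y*Z)) * (-Z * Real.exp (X - Y*Z))
          = -(X - Y*Z) := by linear_combination (-(Y*Z)) * h
      simp only [hcirc, h2, neg_neg, Prod.mk.injEq]
      refine ⟨by linear_combination (-(2*Y*Z)) * h, by ring, by ring⟩
  · rintro ⟨X, Y, Z⟩ ⟨U, V, W⟩ ⟨P, Q, R⟩
    simp only [Prod.mk_add_mk, hcirc, Prod.neg_mk, Prod.mk.injEq]
    refine ⟨by ring, by ring, by ring⟩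
end

section
/- In the skew brace on ℝ³ with (X,Y,Z)·(U,V,W) = (X+U,Y+V,Z+W) and (X,Y,Z)∘(U,V,W) = (X+U+ZeˢV+Ye^{-s}W, Y+eˢV, Z+e^{-s}W) where s = X-YZ, the lambda map of p = (X,Y,Z) is the linear map on ℝ³ given by the matrix [[1, Zeˢ, Ye^{-s}],[0, eˢ, 0],[0, 0, e^{-s}]], and λ_{p∘q} = λ_p ∘ λ_q for all p,q ∈ ℝ³. -/
/-- In the skew brace on `ℝ³` from the paper (additive law plus the `∘`-law
below, with `s = X - YZ`), the lambda map `λ_p(v) = -p + p∘v` of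
`p = (X,Y,Z)` is the linear map with matrix
`[[1, Z eˢ, Y e⁻ˢ], [0, eˢ, 0], [0, 0, e⁻ˢ]]`, and `λ_{p∘q} = λ_p ∘ λ_q`. -/
theorem real3_skewBrace_lambda
    (circ : (ℝ × ℝ × ℝ) → (ℝ × ℝ × ℝ) → (ℝ × ℝ × ℝ))
    (hcirc : ∀ X Y Z U V W : ℝ,
      circ (X, Y, Z) (U, V, W)
        = (X + U + Z * Real.exp (X - Y * Z) * V
              + Y * Real.exp (-(X - Y * Z)) * W,
           Y + Real.exp (X - Y * Z) * V,
           Z + Real.exp (-(X - Y * Z)) * W))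
    (lam : (ℝ × ℝ × ℝ) → (ℝ × ℝ × ℝ) → (ℝ × ℝ × ℝ))
    (hlam : ∀ p v : ℝ × ℝ × ℝ, lam p v = -p + circ p v) :
    (∀ X Y Z U V W : ℝ,
      lam (X, Y, Z) (U, V, W)
        = (U + Z * Real.exp (X - Y * Z) * V + Y * Real.exp (-(X - Y * Z)) * W,
           Real.exp (X - Y * Z) * V,
           Real.exp (-(X - Y * Z)) * W)) ∧
    (∀ p q v : ℝ × ℝ × ℝ, lam (circ p q) v = lam p (lam q v)) := by
  have hlam' : ∀ X Y Z U V W : ℝ,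
      lam (X, Y, Z) (U, V, W)
        = (U + Z * Real.exp (X - Y * Z) * V + Y * Real.exp (-(X - Y * Z)) * W,
           Real.exp (X - Y * Z) * V,
           Real.exp (-(X - Y * Z)) * W) := by
    intro X Y Z U V W
    rw [hlam, hcirc]
    simp [Prod.ext_iff]
    ring
  refine ⟨hlam', ?_⟩
  rintro ⟨X, Y, Z⟩ ⟨U, V, W⟩ ⟨A, B, C⟩
  rw [hcirc, hlam', hlam', hlam']
  have hp : Real.exp (X - Y * Z) * Real.exp (-(X - Y * Z)) = 1 := by
    rw [← Real.exp_add]; simp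
  have hs : (X + U + Z * Real.exp (X - Y * Z) * V + Y * Real.exp (-(X - Y * Z)) * W)
      - (Y + Real.exp (X - Y * Z) * V) * (Z + Real.exp (-(X - Y * Z)) * W)
      = (X - Y * Z) + (U - V * W) := by
    linear_combination (-(V * W)) * hp
  rw [hs]
  have e1 : Real.exp ((X - Y * Z) + (U - V * W))
      = Real.exp (X - Y * Z) * Real.exp (U - V * W) := Real.exp_add _ _
  have e2 : Real.exp (-((X - Y * Z) + (U - V * W)))
      = Real.exp (-(X - Y * Z)) * Real.exp (-(U - V * W)) := by
    rw [← Real.exp_add]; ring_nf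
  rw [e1, e2]
  simp only [Prod.ext_iff]
  refine ⟨?_, by ring, by ring⟩
  linear_combination (W * Real.exp (U - V * W) * B + V * Real.exp (-(U - V * W)) * C) * hp
end
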